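/- If ρ and σ are (possibly subnormalized) density matrices on a d-dimensional Hilbert space with ‖ρ - σ‖₁ ≤ ε ≤ 1/e, then |S(ρ) - S(σ)| ≤ ε log(d/ε), where S(ρ) = -tr(ρ log ρ) (Fannes' inequality). -/

import Mathlib

open Matrix ComplexOrder

/-- The Schatten 1-norm (trace norm) `‖X‖₁ = tr √(Xᴴ X)` of a complex matrix. -/
noncomputable def traceNorm {m n : Type*} [Fintype m] [Fintype n] [DecidableEq n]
    (X : Matrix m n ℂ) : ℝ :=
  (((Matrix.posSemidef_conjTranspose_mul_self X).1.eigenvectorUnitary : Matrix n n ℂ) *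
    diagonal (((↑) : ℝ → ℂ) ∘ Real.sqrt ∘ (Matrix.posSemidef_conjTranspose_mul_self X).1.eigenvalues) *
    (star (Matrix.posSemidef_conjTranspose_mul_self X).1.eigenvectorUnitary : Matrix n n ℂ)).trace.re

/-- The von Neumann entropy `S(ρ) = -∑ᵢ λᵢ log λᵢ`, where `λᵢ` are the eigenvalues
of the Hermitian matrix `ρ`. -/
noncomputable def vonNeumannEntropy {n : Type*} [Fintype n] [DecidableEq n]
    (ρ : Matrix n n ℂ) (hρ : ρ.IsHermitian) : ℝ :=
  -∑ i, hρ.eigenvalues i * Real.log (hρ.eigenvalues i)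

/-!
Order the eigenvalues of `ρ` and `σ` decreasingly as `r` and `s`. Write `ρ - σ = P - N` with
`P, N ≥ 0` its positive and negative parts. Then `M = σ + P = ρ + N` dominates both `ρ` and `σ`,
so by Weyl's monotonicity principle `rᵢ, sᵢ ≤ λᵢ(M)`, whence
`∑ |rᵢ - sᵢ| ≤ tr (2M - ρ - σ) = tr P + tr N = ‖ρ - σ‖₁ ≤ ε`.
For `η x = -x log x` one has `|η x - η y| ≤ η |x - y|` on `[0, 1]` when `|x - y| ≤ 1/e`,
Jensen gives `∑ η δᵢ ≤ d η (Δ / d)` for `Δ = ∑ δᵢ`, and `η` increases on `[0, 1/e]`;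
together `|S ρ - S σ| ≤ d η (ε / d) = ε log (d / ε)`.
-/

namespace Real

lemma negMulLog_add_le {x t : ℝ} (hx : 0 ≤ x) (ht : 0 ≤ t) :
    negMulLog (x + t) ≤ negMulLog x + negMulLog t := by
  simp only [negMulLog, neg_mul, add_mul]
  have hlog (y : ℝ) (hy : 0 ≤ y) (hyxt : y ≤ x + t) : y * log y ≤ y * log (x + t) := by
    rcases hy.eq_or_lt with rfl | hy
    · simp
    · exact mul_le_mul_of_nonneg_left (log_le_log hy hyxt) hy.le
  linarith [hlog x hx (by linarith), hlog t ht (by linarith)]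

lemma negMulLog_sub_negMulLog_add_le {x t : ℝ} (hx : 0 ≤ x) (ht : 0 ≤ t) (hxt : x + t ≤ 1)
    (hte : t ≤ exp (-1)) :
    negMulLog x - negMulLog (x + t) ≤ negMulLog t := by
  rcases ht.eq_or_lt with rfl | ht
  · simp
  simp only [negMulLog, neg_mul]
  have hgap : x * (log (x + t) - log x) ≤ t := by
    rcases hx.eq_or_lt with rfl | hx
    · simpa using ht.le
    · have := log_le_sub_one_of_pos (x := (x + t) / x) (by positivity)
      rw [log_div (by positivity) hx.ne'] at this
      have h := mul_le_mul_of_nonneg_left this hx.le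
      rwa [mul_sub_one, mul_div_cancel₀ _ hx.ne', add_sub_cancel_left] at h
  have hlogxt : log (x + t) ≤ 0 := log_nonpos (by positivity) hxt
  have hlogt : log t ≤ -1 := by simpa using log_le_log ht hte
  nlinarith

lemma abs_negMulLog_sub_negMulLog_le {x y : ℝ} (hx : x ∈ Set.Icc (0 : ℝ) 1)
    (hy : y ∈ Set.Icc (0 : ℝ) 1) (hxy : |x - y| ≤ exp (-1)) :
    |negMulLog x - negMulLog y| ≤ negMulLog |x - y| := by
  wlog hle : x ≤ y generalizing x y
  · rw [abs_sub_comm, abs_sub_comm x]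
    exact this hy hx (by rwa [abs_sub_comm]) (le_of_not_ge hle)
  obtain ⟨t, ht, rfl⟩ : ∃ t, 0 ≤ t ∧ y = x + t := ⟨y - x, by linarith, by ring⟩
  rw [show x - (x + t) = -t by ring, abs_neg, abs_of_nonneg ht] at hxy ⊢
  rw [abs_le]
  constructor
  · linarith [negMulLog_add_le hx.1 ht]
  · exact negMulLog_sub_negMulLog_add_le hx.1 ht hy.2 hxy

lemma monotoneOn_negMulLog : MonotoneOn negMulLog (Set.Icc 0 (exp (-1))) := by
  rintro x ⟨hx, -⟩ y ⟨hy, hye⟩ hxy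
  rcases hx.eq_or_lt with rfl | hx
  · simpa using negMulLog_nonneg hy (hye.trans (exp_le_one_iff.2 (by norm_num)))
  have hy : 0 < y := hx.trans_le hxy
  have hlogy : log y ≤ -1 := by simpa using log_le_log hy hye
  have hratio : log y - log x ≤ y / x - 1 := by
    rw [← log_div hy.ne' hx.ne']
    exact log_le_sub_one_of_pos (by positivity)
  have h := mul_le_mul_of_nonneg_left hratio hx.le
  rw [mul_sub_one, mul_div_cancel₀ _ hx.ne'] at h
  simp only [negMulLog, neg_mul]
  nlinarith

lemma sum_negMulLog_le_card_mul_negMulLog_div {ι : Type*} [Fintype ι] {δ : ι → ℝ}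
    (hδ : ∀ i, 0 ≤ δ i) :
    ∑ i, negMulLog (δ i) ≤ Fintype.card ι * negMulLog ((∑ i, δ i) / Fintype.card ι) := by
  rcases isEmpty_or_nonempty ι with hι | hι
  · simp
  have hcard : (0 : ℝ) < Fintype.card ι := by exact_mod_cast Fintype.card_pos
  have hJensen := concaveOn_negMulLog.le_map_sum (t := Finset.univ)
    (w := fun _ => (Fintype.card ι : ℝ)⁻¹) (p := δ) (fun _ _ => by positivity)
    (by simp [Finset.card_univ, hcard.ne']) (fun i _ => hδ i)
  simp only [smul_eq_mul, ← Finset.mul_sum] at hJensen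
  rw [inv_mul_eq_div] at hJensen
  rwa [div_le_iff₀' hcard, mul_comm _ (∑ i, δ i), ← div_eq_mul_inv] at hJensen

lemma mul_negMulLog_div_eq_mul_log_div {n t : ℝ} (hn : n ≠ 0) :
    n * negMulLog (t / n) = t * log (n / t) := by
  rw [negMulLog, ← inv_div, log_inv]
  field_simp

end Real

namespace OrthonormalBasis

variable {𝕜 E : Type*} [RCLike 𝕜] [NormedAddCommGroup E] [InnerProductSpace 𝕜 E] {n : ℕ}

lemma exists_ne_zero_repr_eq_zero (b b' : OrthonormalBasis (Fin n) 𝕜 E) (i : Fin n) :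
    ∃ x : E, x ≠ 0 ∧ (∀ j, i < j → b.repr x j = 0) ∧ (∀ j, j < i → b'.repr x j = 0) := by
  let L : E →ₗ[𝕜] ({j // i < j} → 𝕜) × ({j // j < i} → 𝕜) :=
    (LinearMap.pi fun j => b.toBasis.coord j.1).prod (LinearMap.pi fun j => b'.toBasis.coord j.1)
  have hrank :
      Module.finrank 𝕜 (({j // i < j} → 𝕜) × ({j // j < i} → 𝕜)) < Module.finrank 𝕜 E := by
    simp only [Module.finrank_prod, Module.finrank_fintype_fun_eq_card, Fintype.card_subtype,
      Module.finrank_eq_card_basis b.toBasis, Fintype.card_fin]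
    rw [Finset.filter_lt_eq_Ioi, Finset.filter_gt_eq_Iio, Fin.card_Ioi, Fin.card_Iio]
    omega
  have := b.toBasis.finiteDimensional_of_finite
  obtain ⟨x, hxL, hx0⟩ := (Submodule.ne_bot_iff _).1 (L.ker_ne_bot_of_finrank_lt hrank)
  rw [LinearMap.mem_ker] at hxL
  refine ⟨x, hx0, fun j hj => ?_, fun j hj => ?_⟩
  · simpa [L] using congr_fun (congr_arg Prod.fst hxL) ⟨j, hj⟩
  · simpa [L] using congr_fun (congr_arg Prod.snd hxL) ⟨j, hj⟩

end OrthonormalBasis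

namespace LinearMap.IsSymmetric

variable {𝕜 E : Type*} [RCLike 𝕜] [NormedAddCommGroup E] [InnerProductSpace 𝕜 E]
  [FiniteDimensional 𝕜 E] {n : ℕ} {T S : E →ₗ[𝕜] E}

lemma re_inner_map_self_eq_sum (hT : T.IsSymmetric) (hn : Module.finrank 𝕜 E = n) (x : E) :
    RCLike.re (inner 𝕜 (T x) x) =
      ∑ j, hT.eigenvalues hn j * ‖(hT.eigenvectorBasis hn).repr x j‖ ^ 2 := by
  rw [← (hT.eigenvectorBasis hn).repr.inner_map_map, PiLp.inner_apply, map_sum]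
  refine Finset.sum_congr rfl fun j _ => ?_
  rw [hT.eigenvectorBasis_apply_self_apply, ← smul_eq_mul, inner_smul_real_left, RCLike.smul_re,
    inner_self_eq_norm_sq]

lemma eigenvalues_mul_norm_sq_le_re_inner (hT : T.IsSymmetric) (hn : Module.finrank 𝕜 E = n)
    {x : E} {i : Fin n} (hx : ∀ j, i < j → (hT.eigenvectorBasis hn).repr x j = 0) :
    hT.eigenvalues hn i * ‖x‖ ^ 2 ≤ RCLike.re (inner 𝕜 (T x) x) := by
  rw [re_inner_map_self_eq_sum, ← (hT.eigenvectorBasis hn).repr.norm_map,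
    EuclideanSpace.norm_sq_eq, Finset.mul_sum]
  refine Finset.sum_le_sum fun j _ => ?_
  rcases le_or_gt j i with hji | hij
  · exact mul_le_mul_of_nonneg_right (hT.eigenvalues_antitone hn hji) (by positivity)
  · simp [hx j hij]

lemma re_inner_le_eigenvalues_mul_norm_sq (hT : T.IsSymmetric) (hn : Module.finrank 𝕜 E = n)
    {x : E} {i : Fin n} (hx : ∀ j, j < i → (hT.eigenvectorBasis hn).repr x j = 0) :
    RCLike.re (inner 𝕜 (T x) x) ≤ hT.eigenvalues hn i * ‖x‖ ^ 2 := by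
  rw [re_inner_map_self_eq_sum, ← (hT.eigenvectorBasis hn).repr.norm_map,
    EuclideanSpace.norm_sq_eq, Finset.mul_sum]
  refine Finset.sum_le_sum fun j _ => ?_
  rcases le_or_gt i j with hij | hji
  · exact mul_le_mul_of_nonneg_right (hT.eigenvalues_antitone hn hij) (by positivity)
  · simp [hx j hji]

/-- Weyl's monotonicity principle. -/
theorem eigenvalues_le_eigenvalues_of_le (hT : T.IsSymmetric) (hS : S.IsSymmetric)
    (hn : Module.finrank 𝕜 E = n) (hTS : T ≤ S) (i : Fin n) :
    hT.eigenvalues hn i ≤ hS.eigenvalues hn i := by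
  obtain ⟨x, hx0, hxT, hxS⟩ :=
    (hT.eigenvectorBasis hn).exists_ne_zero_repr_eq_zero (hS.eigenvectorBasis hn) i
  have hquad : RCLike.re (inner 𝕜 (T x) x) ≤ RCLike.re (inner 𝕜 (S x) x) := by
    have := ((LinearMap.le_def T S).1 hTS).re_inner_nonneg_left x
    rwa [LinearMap.sub_apply, inner_sub_left, map_sub, sub_nonneg] at this
  exact le_of_mul_le_mul_right
    ((hT.eigenvalues_mul_norm_sq_le_re_inner hn hxT).trans
      (hquad.trans (hS.re_inner_le_eigenvalues_mul_norm_sq hn hxS)))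
    (by positivity)

end LinearMap.IsSymmetric

section MatrixOrder

open scoped MatrixOrder

namespace Matrix.IsHermitian

variable {𝕜 n : Type*} [RCLike 𝕜] [Fintype n] [DecidableEq n] {A B : Matrix n n 𝕜}

lemma eigenvalues₀_le_eigenvalues₀_of_le (hA : A.IsHermitian) (hB : B.IsHermitian) (hAB : A ≤ B)
    (i : Fin (Fintype.card n)) : hA.eigenvalues₀ i ≤ hB.eigenvalues₀ i :=
  LinearMap.IsSymmetric.eigenvalues_le_eigenvalues_of_le _ _ _
    (by rw [LinearMap.le_def, ← map_sub, isPositive_toEuclideanLin_iff]; exact hAB) i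

lemma sum_eigenvalues₀_comp (hA : A.IsHermitian) (f : ℝ → ℝ) :
    ∑ i, f (hA.eigenvalues₀ i) = ∑ j, f (hA.eigenvalues j) :=
  ((Fintype.equivOfCardEq (Fintype.card_fin _)).symm.sum_comp
    (fun i => f (hA.eigenvalues₀ i))).symm

lemma sum_eigenvalues₀_eq_re_trace (hA : A.IsHermitian) :
    ∑ i, hA.eigenvalues₀ i = RCLike.re A.trace := by
  rw [hA.trace_eq_sum_eigenvalues, map_sum]
  simpa using hA.sum_eigenvalues₀_comp id

lemma eigenvalues₀_mem_range (hA : A.IsHermitian) (i : Fin (Fintype.card n)) :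
    hA.eigenvalues₀ i ∈ Set.range hA.eigenvalues :=
  ⟨Fintype.equivOfCardEq (Fintype.card_fin _) i, by simp [eigenvalues]⟩

end Matrix.IsHermitian

lemma Matrix.PosSemidef.eigenvalues₀_mem_Icc {𝕜 n : Type*} [RCLike 𝕜] [Fintype n]
    [DecidableEq n] {A : Matrix n n 𝕜} (hA : A.PosSemidef) (htr : RCLike.re A.trace ≤ 1)
    (i : Fin (Fintype.card n)) : hA.1.eigenvalues₀ i ∈ Set.Icc 0 1 := by
  have hnonneg (j) : 0 ≤ hA.1.eigenvalues₀ j := by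
    obtain ⟨k, hk⟩ := hA.1.eigenvalues₀_mem_range j
    exact hk ▸ hA.eigenvalues_nonneg k
  refine ⟨hnonneg i, le_trans ?_ htr⟩
  rw [← hA.1.sum_eigenvalues₀_eq_re_trace]
  exact Finset.single_le_sum (fun j _ => hnonneg j) (Finset.mem_univ i)

variable {n : Type*} [Fintype n] [DecidableEq n]

lemma traceNorm_eq_re_trace_abs (X : Matrix n n ℂ) : traceNorm X = (CFC.abs X).trace.re := by
  rw [CFC.abs, star_eq_conjTranspose,
    CFC.sqrt_eq_real_sqrt _ (posSemidef_conjTranspose_mul_self X).nonneg,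
    cfcₙ_eq_cfc (hf0 := Real.sqrt_zero), (posSemidef_conjTranspose_mul_self X).1.cfc_eq]
  rfl

lemma sum_abs_eigenvalues₀_sub_le_traceNorm {A B : Matrix n n ℂ} (hA : A.IsHermitian)
    (hB : B.IsHermitian) :
    ∑ i, |hA.eigenvalues₀ i - hB.eigenvalues₀ i| ≤ traceNorm (A - B) := by
  have hAB : IsSelfAdjoint (A - B) := (hA.sub hB).isSelfAdjoint
  set M := B + (A - B)⁺ with hM_def
  have hM : M.IsHermitian := hB.add (IsSelfAdjoint.of_nonneg (CFC.posPart_nonneg _))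
  have hMA : M - A = (A - B)⁻ := by
    have h := CFC.posPart_sub_negPart (A - B) hAB
    rw [← sub_eq_zero] at h ⊢
    rw [← h, hM_def]
    abel
  have hMB : M - B = (A - B)⁺ := add_sub_cancel_left B _
  have hAM : A ≤ M := by rw [← sub_nonneg, hMA]; exact CFC.negPart_nonneg _
  have hBM : B ≤ M := by rw [← sub_nonneg, hMB]; exact CFC.posPart_nonneg _
  calc ∑ i, |hA.eigenvalues₀ i - hB.eigenvalues₀ i|
      ≤ ∑ i, ((hM.eigenvalues₀ i - hA.eigenvalues₀ i) +
          (hM.eigenvalues₀ i - hB.eigenvalues₀ i)) := by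
        refine Finset.sum_le_sum fun i _ => abs_le.2 ⟨?_, ?_⟩ <;>
          linarith [hA.eigenvalues₀_le_eigenvalues₀_of_le hM hAM i,
            hB.eigenvalues₀_le_eigenvalues₀_of_le hM hBM i]
    _ = (M - A).trace.re + (M - B).trace.re := by
        simp only [Finset.sum_add_distrib, Finset.sum_sub_distrib, hM.sum_eigenvalues₀_eq_re_trace,
          hA.sum_eigenvalues₀_eq_re_trace, hB.sum_eigenvalues₀_eq_re_trace, trace_sub,
          Complex.sub_re, RCLike.re_to_complex]
    _ = traceNorm (A - B) := by
        rw [hMA, hMB, traceNorm_eq_re_trace_abs, ← CFC.posPart_add_negPart (A - B), trace_add,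
          Complex.add_re, add_comm]

lemma vonNeumannEntropy_eq_sum_negMulLog {ρ : Matrix n n ℂ} (hρ : ρ.IsHermitian) :
    vonNeumannEntropy ρ hρ = ∑ i, Real.negMulLog (hρ.eigenvalues₀ i) := by
  rw [vonNeumannEntropy, hρ.sum_eigenvalues₀_comp, ← Finset.sum_neg_distrib]
  simp [Real.negMulLog]

end MatrixOrder

/-- Fannes' inequality: if `ρ, σ` are (possibly subnormalized) density matrices on a
`d`-dimensional Hilbert space with `‖ρ - σ‖₁ ≤ ε ≤ 1/e`, then
`|S(ρ) - S(σ)| ≤ ε log (d/ε)`. -/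
theorem fannes_inequality {d : ℕ} (ρ σ : Matrix (Fin d) (Fin d) ℂ)
    (hρ : ρ.PosSemidef) (hσ : σ.PosSemidef)
    (hρt : ρ.trace.re ≤ 1) (hσt : σ.trace.re ≤ 1)
    (ε : ℝ) (hε : 0 < ε) (hεe : ε ≤ 1 / Real.exp 1)
    (h : traceNorm (ρ - σ) ≤ ε) :
    |vonNeumannEntropy ρ hρ.1 - vonNeumannEntropy σ hσ.1| ≤ ε * Real.log (d / ε) := by
  rcases Nat.eq_zero_or_pos d with rfl | hd
  · simp [vonNeumannEntropy]
  have hd' : (1 : ℝ) ≤ d := by exact_mod_cast hd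
  set r := hρ.1.eigenvalues₀
  set s := hσ.1.eigenvalues₀
  have hΔ : ∑ i, |r i - s i| ≤ ε := (sum_abs_eigenvalues₀_sub_le_traceNorm hρ.1 hσ.1).trans h
  have hεe' : ε ≤ Real.exp (-1) := by rwa [Real.exp_neg, ← one_div]
  calc |vonNeumannEntropy ρ hρ.1 - vonNeumannEntropy σ hσ.1|
      = |∑ i, (Real.negMulLog (r i) - Real.negMulLog (s i))| := by
        rw [vonNeumannEntropy_eq_sum_negMulLog, vonNeumannEntropy_eq_sum_negMulLog,
          Finset.sum_sub_distrib]
    _ ≤ ∑ i, |Real.negMulLog (r i) - Real.negMulLog (s i)| := Finset.abs_sum_le_sum_abs _ _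
    _ ≤ ∑ i, Real.negMulLog |r i - s i| := Finset.sum_le_sum fun i _ =>
        Real.abs_negMulLog_sub_negMulLog_le (hρ.eigenvalues₀_mem_Icc hρt i)
          (hσ.eigenvalues₀_mem_Icc hσt i)
          ((Finset.single_le_sum (fun j _ => abs_nonneg (r j - s j)) (Finset.mem_univ i)).trans
            (hΔ.trans hεe'))
    _ ≤ d * Real.negMulLog ((∑ i, |r i - s i|) / d) := by
        simpa using Real.sum_negMulLog_le_card_mul_negMulLog_div fun i => abs_nonneg (r i - s i)
    _ ≤ d * Real.negMulLog (ε / d) := by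
        refine mul_le_mul_of_nonneg_left (Real.monotoneOn_negMulLog ⟨by positivity, ?_⟩
          ⟨by positivity, (div_le_self hε.le hd').trans hεe'⟩ (by gcongr)) (by positivity)
        exact (div_le_self (by positivity) hd').trans (hΔ.trans hεe')
    _ = ε * Real.log (d / ε) := Real.mul_negMulLog_div_eq_mul_log_div (by positivity)
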